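/- arXiv:2112.06635 — 6 statements merged into one kernel-verified Lean document; each statement's English description precedes it below -/
import Mathlib

section
/- For an odd prime p and 0 ≤ i ≤ s-1, the sum of Lee weights over the ideal generated by p^i in Z/p^sZ equals (p^{2s-i} - p^i)/4. -/
/-- The Lee weight of an element of `ZMod m`. -/
def leeW (m : ℕ) (a : ZMod m) : ℕ := min a.val (m - a.val)

/-!
The ideal `⟨d⟩` of `ℤ/dNℤ` is `{d j : j < N}`, and the Lee weight of `d j` is `d · min(j, N - j)`.
For odd `N = 2k + 1` the values `min(j, N - j)`, `j < N`, run through `0, 1, …, k` and then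
`k, …, 1`, so they sum to `k (k + 1) = (N² - 1) / 4`. Take `d = p^i` and `N = p^(s-i)`.
-/

open Finset

theorem Nat.four_mul_sum_range_min_sub_of_odd {N : ℕ} (hN : Odd N) :
    4 * ∑ j ∈ range N, min j (N - j) = N ^ 2 - 1 := by
  obtain ⟨k, rfl⟩ := hN
  rw [show 2 * k + 1 = k + 1 + k by ring, sum_range_add]
  have lower : ∑ j ∈ range (k + 1), min j (k + 1 + k - j) = ∑ j ∈ range (k + 1), j :=
    sum_congr rfl fun j hj => by simp only [mem_range] at hj; omega
  have upper : ∑ j ∈ range k, min (k + 1 + j) (k + 1 + k - (k + 1 + j))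
      = ∑ j ∈ range (k + 1), j := by
    rw [sum_range_succ', add_zero, ← sum_range_reflect]
    exact sum_congr rfl fun j hj => by simp only [mem_range] at hj; omega
  have gauss : (∑ j ∈ range (k + 1), j) * 2 = (k + 1) * k := by
    rw [sum_range_id_mul_two, Nat.add_sub_cancel]
  rw [lower, upper, show (k + 1 + k) ^ 2 = 4 * ((k + 1) * k) + 1 by ring]
  omega

section Ideal

variable {d N m : ℕ} [NeZero m]

theorem ZMod.val_natCast_mul_of_lt (h : d * N = m) {j : ℕ} (hj : j < N) :
    ((d * j : ℕ) : ZMod m).val = d * j := by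
  have hd : d ≠ 0 := left_ne_zero_of_mul (h ▸ NeZero.ne m)
  exact ZMod.val_natCast_of_lt (h ▸ Nat.mul_lt_mul_of_pos_left hj (Nat.pos_of_ne_zero hd))

theorem leeW_natCast_mul (h : d * N = m) {j : ℕ} (hj : j < N) :
    leeW m (d * j : ℕ) = d * min j (N - j) := by
  rw [leeW, ZMod.val_natCast_mul_of_lt h hj, ← h, ← Nat.mul_sub, min_mul_mul_left]

open scoped Classical in
theorem filter_mem_span_natCast_eq_image (h : d * N = m) :
    univ.filter (· ∈ Ideal.span {(d : ZMod m)})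
      = (range N).image fun j => ((d * j : ℕ) : ZMod m) := by
  ext a
  simp only [mem_filter, mem_univ, true_and, mem_image, mem_range, Ideal.mem_span_singleton']
  constructor
  · rintro ⟨b, rfl⟩
    have hN : N ≠ 0 := right_ne_zero_of_mul (h ▸ NeZero.ne m)
    -- the witness works because `d * (b % N) = d * b % (d * N)`
    refine ⟨b.val % N, Nat.mod_lt _ (Nat.pos_of_ne_zero hN), ?_⟩
    rw [← Nat.mul_mod_mul_left, h, ZMod.natCast_mod, Nat.cast_mul, ZMod.natCast_zmod_val,
      mul_comm]
  · rintro ⟨j, -, rfl⟩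
    exact ⟨j, by push_cast; ring⟩

open scoped Classical in
theorem sum_leeW_span_natCast (h : d * N = m) :
    ∑ a ∈ univ.filter (· ∈ Ideal.span {(d : ZMod m)}), leeW m a
      = d * ∑ j ∈ range N, min j (N - j) := by
  have hinj : Set.InjOn (fun j => ((d * j : ℕ) : ZMod m)) (range N) := by
    intro x hx y hy hxy
    have hd : d ≠ 0 := left_ne_zero_of_mul (h ▸ NeZero.ne m)
    have hval := congrArg ZMod.val hxy
    rw [ZMod.val_natCast_mul_of_lt h (mem_range.1 hx),
      ZMod.val_natCast_mul_of_lt h (mem_range.1 hy)] at hval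
    exact mul_left_cancel₀ hd hval
  rw [filter_mem_span_natCast_eq_image h, sum_image hinj, mul_sum]
  exact sum_congr rfl fun j hj => leeW_natCast_mul h (mem_range.1 hj)

end Ideal

open scoped Classical in
theorem total_lee_weight_ideal_odd_general (p s i : ℕ) (hodd : Odd p)
    (hi : i ≤ s - 1) (m : ℕ) (hm : m = p ^ s) [NeZero m] :
    4 * ∑ a ∈ Finset.univ.filter (· ∈ Ideal.span {(p : ZMod m) ^ i}), leeW m a
      = p ^ (2 * s - i) - p ^ i := by
  have hsplit : p ^ i * p ^ (s - i) = m := by rw [← pow_add, hm]; congr 1; omega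
  rw [← Nat.cast_pow, sum_leeW_span_natCast hsplit, mul_left_comm,
    Nat.four_mul_sum_range_min_sub_of_odd hodd.pow, Nat.mul_sub, mul_one, ← pow_mul, ← pow_add]
  congr 2
  omega

open scoped Classical in
/-- For an odd prime `p` and `0 ≤ i ≤ s-1`, the total Lee weight of the ideal
`⟨p^i⟩ ⊆ ℤ/p^sℤ` equals `(p^{2s-i} - p^i)/4`. -/
theorem total_lee_weight_ideal_odd (p s i : ℕ) (hp : p.Prime) (hodd : Odd p)
    (hs : 0 < s) (hi : i ≤ s - 1) (m : ℕ) (hm : m = p ^ s) [NeZero m] :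
    4 * ∑ a ∈ Finset.univ.filter (· ∈ Ideal.span {(p : ZMod m) ^ i}), leeW m a
      = p ^ (2 * s - i) - p ^ i :=
  total_lee_weight_ideal_odd_general p s i hodd hi m hm
end

section
/- Let C be a Z/p^sZ-submodule of (Z/p^sZ)^n and C' a nonzero submodule of C. Then d_L(C) ≤ |C'|/(|C'|-1) · (average Lee weight of C'). -/
/-- The Lee weight of a vector over `ZMod m`. -/
def leeWV (m n : ℕ) (x : Fin n → ZMod m) : ℕ := ∑ i, leeW m (x i)

/-- The minimum Lee distance of a linear code. -/
noncomputable def dLee (m n : ℕ) (C : Submodule (ZMod m) (Fin n → ZMod m)) : ℕ :=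
  sInf {w | ∃ c ∈ C, c ≠ 0 ∧ leeWV m n c = w}

/-!
Every nonzero word of `C'` lies in `C`, so its Lee weight is at least `d_L(C)`. Summing over the
`|C'| - 1` nonzero words gives `(|C'| - 1) d_L(C) ≤ ∑_{c ∈ C'} w_L(c)`, which is the bound after
dividing by `|C'| - 1 > 0`.
-/

open Finset

section LeeDistance

variable {m n : ℕ} {C : Submodule (ZMod m) (Fin n → ZMod m)}

theorem dLee_le_leeWV {c : Fin n → ZMod m} (hc : c ∈ C) (hc0 : c ≠ 0) :
    dLee m n C ≤ leeWV m n c :=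
  Nat.sInf_le ⟨c, hc, hc0, rfl⟩

theorem card_sub_one_mul_dLee_le_sum_leeWV (S : Finset (Fin n → ZMod m)) (hS : ∀ c ∈ S, c ∈ C) :
    (#S - 1) * dLee m n C ≤ ∑ c ∈ S, leeWV m n c := by
  classical
  calc (#S - 1) * dLee m n C ≤ #(S.erase 0) * dLee m n C :=
        Nat.mul_le_mul_right _ pred_card_le_card_erase
    _ ≤ ∑ c ∈ S.erase 0, leeWV m n c :=
        card_nsmul_le_sum _ _ _ fun c hc ↦
          dLee_le_leeWV (hS c (mem_of_mem_erase hc)) (ne_of_mem_erase hc)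
    _ ≤ ∑ c ∈ S, leeWV m n c := sum_le_sum_of_subset (erase_subset _ _)

end LeeDistance

theorem le_div_sub_one_mul_div_of_sub_one_mul_le {N d W : ℚ} (hN : 1 < N)
    (h : (N - 1) * d ≤ W) : d ≤ N / (N - 1) * (W / N) := by
  have hN1 : 0 < N - 1 := sub_pos.mpr hN
  rw [div_mul_div_comm, mul_comm N W, mul_div_mul_right _ _ (by positivity), le_div_iff₀ hN1]
  linarith

open scoped Classical in
theorem plotkin_subcode_bound_general (n : ℕ)
    (m : ℕ) [NeZero m]
    (C C' : Submodule (ZMod m) (Fin n → ZMod m)) (hsub : C' ≤ C) (hC' : C' ≠ ⊥) :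
    (dLee m n C : ℚ)
      ≤ (Nat.card C' : ℚ) / ((Nat.card C' : ℚ) - 1) *
        ((∑ c ∈ Finset.univ.filter (· ∈ C'), (leeWV m n c : ℚ)) / (Nat.card C' : ℚ)) := by
  set S := univ.filter (· ∈ C')
  have hcard : Nat.card C' = #S := by rw [Nat.card_eq_fintype_card, Fintype.card_subtype]
  have hS : 1 < #S :=
    hcard ▸ Finite.one_lt_card_iff_nontrivial.mpr (Submodule.nontrivial_iff_ne_bot.mpr hC')
  have hbound := card_sub_one_mul_dLee_le_sum_leeWV S fun c hc ↦ hsub (mem_filter.mp hc).2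
  rw [hcard]
  refine le_div_sub_one_mul_div_of_sub_one_mul_le (by exact_mod_cast hS) ?_
  have := (Nat.cast_le (α := ℚ)).mpr hbound
  push_cast [Nat.cast_sub hS.le] at this
  exact this

open scoped Classical in
/-- If `C'` is a nonzero subcode of `C`, then
`d_L(C) ≤ |C'|/(|C'|-1) · (average Lee weight of C')`. -/
theorem plotkin_subcode_bound (p s n : ℕ) (hp : p.Prime) (hs : 0 < s)
    (m : ℕ) (hm : m = p ^ s) [NeZero m]
    (C C' : Submodule (ZMod m) (Fin n → ZMod m)) (hsub : C' ≤ C) (hC' : C' ≠ ⊥) :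
    (dLee m n C : ℚ)
      ≤ (Nat.card C' : ℚ) / ((Nat.card C' : ℚ) - 1) *
        ((∑ c ∈ Finset.univ.filter (· ∈ C'), (leeWV m n c : ℚ)) / (Nat.card C' : ℚ)) :=
  plotkin_subcode_bound_general n m C C' hsub hC'
end

section
/- For any submodule C of (Z/p^sZ)^n with at least two elements, d_L(C) ≤ A(p,s,1)·d_H(C), where A(p,s,1) = p^{s-1}(p+1)/4 for p odd and A(2,s,1) = 2^{s-1}. -/
/-- The minimum Hamming distance of a linear code. -/
noncomputable def dHam (m n : ℕ) (C : Submodule (ZMod m) (Fin n → ZMod m)) : ℕ :=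
  sInf {w | ∃ c ∈ C, c ≠ 0 ∧ hammingNorm c = w}

/-- The constant `A(p,s,1)`: `p^{s-1}(p+1)/4` for `p` odd, `2^{s-1}` for `p = 2`. -/
noncomputable def Aps1 (p s : ℕ) : ℚ :=
  if p = 2 then (2 : ℚ) ^ (s - 1)
  else ((p : ℚ) ^ (s - 1) * ((p : ℚ) + 1)) / 4

open Finset

theorem exists_pow_nsmul_ne_zero_and_nsmul_eq_zero {M : Type*} [AddMonoid M] {c : M}
    (hc : c ≠ 0) (p : ℕ) {s : ℕ} (h : p ^ s • c = 0) : ∃ k, p ^ k • c ≠ 0 ∧ p • p ^ k • c = 0 := by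
  induction s with
  | zero => exact absurd (by simpa using h) hc
  | succ s ih =>
    by_cases hs : p ^ s • c = 0
    · exact ih hs
    · exact ⟨s, hs, by rwa [smul_smul, ← pow_succ']⟩

theorem sum_range_min_sub_two_mul_add_one (k : ℕ) :
    ∑ j ∈ range (2 * k + 1), min j (2 * k + 1 - j) = k * (k + 1) := by
  have hlow : ∑ j ∈ range (k + 1), min j (2 * k + 1 - j) = ∑ j ∈ range (k + 1), j :=
    sum_congr rfl fun j hj => by rw [mem_range] at hj; omega
  have hhigh : ∑ j ∈ range k, min (k + 1 + j) (2 * k + 1 - (k + 1 + j)) =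
      ∑ j ∈ range k, (j + 1) := by
    rw [← sum_range_reflect]
    exact sum_congr rfl fun j hj => by rw [mem_range] at hj; omega
  have hgauss := sum_range_id_mul_two (k + 1)
  rw [sum_range_succ'] at hgauss
  rw [show 2 * k + 1 = (k + 1) + k by ring, sum_range_add, show (k + 1) + k = 2 * k + 1 by ring,
    hlow, hhigh, sum_range_succ']
  simp only [add_tsub_cancel_right] at hgauss
  linarith

theorem leeW_zero (m : ℕ) : leeW m 0 = 0 := by simp [leeW]

theorem sum_leeW_eq_sum_range (m : ℕ) [NeZero m] :
    ∑ y : ZMod m, leeW m y = ∑ j ∈ range m, min j (m - j) := by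
  obtain ⟨k, rfl⟩ : ∃ k, m = k + 1 := Nat.exists_eq_succ_of_ne_zero (NeZero.ne m)
  exact Fin.sum_univ_eq_sum_range (fun j => min j (k + 1 - j)) (k + 1)

theorem Aps1_one_nonneg (p : ℕ) : 0 ≤ Aps1 p 1 := by
  unfold Aps1; split_ifs <;> positivity

theorem Aps1_eq_pow_mul (p s : ℕ) : Aps1 p s = p ^ (s - 1) * Aps1 p 1 := by
  unfold Aps1; split_ifs with h <;> simp [h]; ring

theorem cast_sum_leeW_of_prime (p : ℕ) [hp : Fact p.Prime] :
    ((∑ y : ZMod p, leeW p y : ℕ) : ℚ) = (p - 1) * Aps1 p 1 := by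
  rw [sum_leeW_eq_sum_range, Aps1]
  rcases hp.out.eq_two_or_odd' with rfl | ⟨k, rfl⟩
  · norm_num [sum_range_succ]
  · rw [if_neg (by omega), sum_range_min_sub_two_mul_add_one]
    push_cast; ring

def toSocle (p s : ℕ) (b : ZMod p) : ZMod (p ^ s) := ((p ^ (s - 1) * b.val : ℕ) : ZMod (p ^ s))

section Socle

variable {p s n : ℕ}

theorem val_toSocle [NeZero p] (hs : 0 < s) (b : ZMod p) :
    (toSocle p s b).val = p ^ (s - 1) * b.val := by
  rw [toSocle, ZMod.val_natCast, Nat.mod_eq_of_lt]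
  calc p ^ (s - 1) * b.val < p ^ (s - 1) * p :=
        Nat.mul_lt_mul_of_pos_left (ZMod.val_lt b) (pow_pos (NeZero.pos p) _)
    _ = p ^ s := pow_sub_one_mul hs.ne' p

theorem toSocle_zero : toSocle p s 0 = 0 := by simp [toSocle]

theorem toSocle_injective [NeZero p] (hs : 0 < s) : Function.Injective (toSocle p s) := by
  intro a b h
  have := congrArg ZMod.val h
  rw [val_toSocle hs, val_toSocle hs] at this
  exact ZMod.val_injective p (Nat.eq_of_mul_eq_mul_left (pow_pos (NeZero.pos p) _) this)

theorem leeW_toSocle [NeZero p] (hs : 0 < s) (b : ZMod p) :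
    leeW (p ^ s) (toSocle p s b) = p ^ (s - 1) * leeW p b := by
  rw [leeW, leeW, val_toSocle hs, ← pow_sub_one_mul hs.ne' p, ← Nat.mul_sub, Nat.mul_min_mul_left]

theorem natCast_val_mul_toSocle (hs : 0 < s) (y b : ZMod p) :
    (y.val : ZMod (p ^ s)) * toSocle p s b = toSocle p s (y * b) := by
  obtain ⟨q, hq⟩ : ∃ q, y.val * b.val = p * q + (y * b).val :=
    ⟨y.val * b.val / p, by rw [ZMod.val_mul, Nat.div_add_mod]⟩
  have hps : ((p ^ (s - 1) * p : ℕ) : ZMod (p ^ s)) = 0 := by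
    rw [pow_sub_one_mul hs.ne' p, ZMod.natCast_self]
  calc (y.val : ZMod (p ^ s)) * toSocle p s b
      = ((p ^ (s - 1) * p * q + p ^ (s - 1) * (y * b).val : ℕ) : ZMod (p ^ s)) := by
        rw [toSocle, ← Nat.cast_mul, show p ^ (s - 1) * p * q + p ^ (s - 1) * (y * b).val
          = y.val * (p ^ (s - 1) * b.val) by rw [mul_left_comm, hq]; ring]
    _ = toSocle p s (y * b) := by
        rw [Nat.cast_add, Nat.cast_mul, hps, zero_mul, zero_add, toSocle]

theorem exists_toSocle_eq_of_mul_eq_zero [NeZero p] (hs : 0 < s) {x : ZMod (p ^ s)}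
    (hx : (p : ZMod (p ^ s)) * x = 0) : ∃ b : ZMod p, toSocle p s b = x := by
  have hdvd : p ^ (s - 1) * p ∣ x.val * p := by
    rw [pow_sub_one_mul hs.ne' p, ← ZMod.natCast_eq_zero_iff, Nat.cast_mul, ZMod.natCast_zmod_val,
      mul_comm, hx]
  obtain ⟨q, hq⟩ := Nat.dvd_of_mul_dvd_mul_right (NeZero.pos p) hdvd
  have hqp : q < p := by
    refine Nat.lt_of_mul_lt_mul_left (a := p ^ (s - 1)) ?_
    rw [← hq, pow_sub_one_mul hs.ne' p]
    exact ZMod.val_lt x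
  refine ⟨q, ?_⟩
  rw [toSocle, ZMod.val_natCast, Nat.mod_eq_of_lt hqp, ← hq, ZMod.natCast_zmod_val]

theorem toSocle_comp_eq_zero_iff [NeZero p] (hs : 0 < s) {b : Fin n → ZMod p} :
    toSocle p s ∘ b = 0 ↔ b = 0 :=
  (toSocle_injective hs).comp_left.eq_iff' (funext fun _ => toSocle_zero)

theorem exists_toSocle_comp_mem [NeZero p] (hs : 0 < s)
    (C : Submodule (ZMod (p ^ s)) (Fin n → ZMod (p ^ s))) {c : Fin n → ZMod (p ^ s)}
    (hcC : c ∈ C) (hc : c ≠ 0) :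
    ∃ b : Fin n → ZMod p, b ≠ 0 ∧ toSocle p s ∘ b ∈ C ∧ hammingNorm b ≤ hammingNorm c := by
  have hps : p ^ s • c = 0 := by ext i; simp
  obtain ⟨k, hk0, hkp⟩ := exists_pow_nsmul_ne_zero_and_nsmul_eq_zero hc p hps
  choose b hb using fun i =>
    exists_toSocle_eq_of_mul_eq_zero hs (x := (p ^ k • c) i) (by simpa using congrFun hkp i)
  have hcomp : toSocle p s ∘ b = p ^ k • c := funext hb
  refine ⟨b, ?_, hcomp ▸ C.nsmul_mem hcC _, ?_⟩
  · rw [Ne, ← toSocle_comp_eq_zero_iff hs, hcomp]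
    exact hk0
  · calc hammingNorm b = hammingNorm (toSocle p s ∘ b) :=
          (hammingNorm_comp (fun _ => toSocle p s) (fun _ => toSocle_injective hs)
            (fun _ => toSocle_zero)).symm
      _ = hammingNorm (p ^ k • c) := by rw [hcomp]
      _ ≤ hammingNorm c := hammingNorm_smul_le_hammingNorm

theorem leeWV_toSocle_comp [NeZero p] (hs : 0 < s) (b : Fin n → ZMod p) :
    leeWV (p ^ s) n (toSocle p s ∘ b) = p ^ (s - 1) * leeWV p n b := by
  simp [leeWV, leeW_toSocle hs, mul_sum]

theorem toSocle_comp_smul (hs : 0 < s) (y : ZMod p) (b : Fin n → ZMod p) :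
    toSocle p s ∘ (y • b) = (y.val : ZMod (p ^ s)) • (toSocle p s ∘ b) :=
  funext fun i => by simp [natCast_val_mul_toSocle hs]

end Socle

section Averaging

variable {p n : ℕ} [Fact p.Prime]

theorem sum_leeW_mul (a : ZMod p) :
    ∑ y : ZMod p, leeW p (y * a) = if a = 0 then 0 else ∑ y : ZMod p, leeW p y := by
  split_ifs with ha
  · simp [ha, leeW_zero]
  · exact Equiv.sum_comp (Equiv.mulRight₀ a ha) (leeW p)

theorem sum_leeWV_smul (b : Fin n → ZMod p) :
    ∑ y : ZMod p, leeWV p n (y • b) = hammingNorm b * ∑ y : ZMod p, leeW p y := by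
  simp only [leeWV, Pi.smul_apply, smul_eq_mul]
  rw [sum_comm]
  simp [sum_leeW_mul, sum_ite, hammingNorm]

theorem exists_ne_zero_leeWV_smul_le (b : Fin n → ZMod p) :
    ∃ y : ZMod p, y ≠ 0 ∧ (leeWV p n (y • b) : ℚ) ≤ Aps1 p 1 * hammingNorm b := by
  have hp := (Fact.out : p.Prime)
  have hsum : ∑ y ∈ univ.erase (0 : ZMod p), (leeWV p n (y • b) : ℚ)
      = ∑ y ∈ univ.erase (0 : ZMod p), Aps1 p 1 * hammingNorm b := by
    rw [sum_erase _ (by simp [leeWV, leeW_zero]), ← Nat.cast_sum, sum_leeWV_smul, Nat.cast_mul,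
      cast_sum_leeW_of_prime, sum_const, card_erase_of_mem (mem_univ _), card_univ, ZMod.card,
      nsmul_eq_mul, Nat.cast_sub hp.one_le]
    push_cast; ring
  have hne : (univ.erase (0 : ZMod p)).Nonempty := ⟨1, by simp⟩
  obtain ⟨y, hy, hle⟩ := exists_le_of_sum_le hne hsum.le
  exact ⟨y, ne_of_mem_erase hy, hle⟩

end Averaging

theorem exists_mem_hammingNorm_eq_dHam {m n : ℕ} {C : Submodule (ZMod m) (Fin n → ZMod m)}
    (hC : 2 ≤ Nat.card C) : ∃ c ∈ C, c ≠ 0 ∧ hammingNorm c = dHam m n C := by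
  have hbot : C ≠ ⊥ := by
    rintro rfl
    simp at hC
  obtain ⟨c, hcC, hc⟩ := Submodule.exists_mem_ne_zero_of_ne_bot hbot
  exact Nat.sInf_mem (s := {w | ∃ c ∈ C, c ≠ 0 ∧ hammingNorm c = w}) ⟨_, c, hcC, hc, rfl⟩

theorem lee_from_hamming_ell_one_general (p s n : ℕ) (hp : p.Prime) (hs : 0 < s)
    (m : ℕ) (hm : m = p ^ s)
    (C : Submodule (ZMod m) (Fin n → ZMod m)) (hC : 2 ≤ Nat.card C) :
    (dLee m n C : ℚ) ≤ Aps1 p s * (dHam m n C : ℚ) := by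
  subst hm
  have := Fact.mk hp
  obtain ⟨c, hcC, hc, hcH⟩ := exists_mem_hammingNorm_eq_dHam hC
  obtain ⟨b, hb, hbC, hbH⟩ := exists_toSocle_comp_mem hs C hcC hc
  obtain ⟨y, hy, hyb⟩ := exists_ne_zero_leeWV_smul_le b
  have hmem : toSocle p s ∘ (y • b) ∈ C := by
    rw [toSocle_comp_smul hs]
    exact C.smul_mem _ hbC
  have hne : toSocle p s ∘ (y • b) ≠ 0 :=
    (toSocle_comp_eq_zero_iff hs).not.mpr (smul_ne_zero hy hb)
  calc (dLee (p ^ s) n C : ℚ) ≤ leeWV (p ^ s) n (toSocle p s ∘ (y • b)) :=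
        Nat.cast_le.mpr (Nat.sInf_le ⟨_, hmem, hne, rfl⟩)
    _ = p ^ (s - 1) * leeWV p n (y • b) := by rw [leeWV_toSocle_comp hs]; push_cast; rfl
    _ ≤ p ^ (s - 1) * (Aps1 p 1 * hammingNorm b) := by gcongr
    _ ≤ p ^ (s - 1) * (Aps1 p 1 * dHam (p ^ s) n C) := by
        gcongr
        · exact Aps1_one_nonneg p
        · rw [← hcH]; exact_mod_cast hbH
    _ = Aps1 p s * dHam (p ^ s) n C := by rw [Aps1_eq_pow_mul p s]; ring

/-- For any submodule `C` of `(ℤ/p^sℤ)^n` with at least two elements,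
`d_L(C) ≤ A(p,s,1)·d_H(C)`. -/
theorem lee_from_hamming_ell_one (p s n : ℕ) (hp : p.Prime) (hs : 0 < s)
    (m : ℕ) (hm : m = p ^ s) [NeZero m]
    (C : Submodule (ZMod m) (Fin n → ZMod m)) (hC : 2 ≤ Nat.card C) :
    (dLee m n C : ℚ) ≤ Aps1 p s * (dHam m n C : ℚ) :=
  lee_from_hamming_ell_one_general p s n hp hs m hm C hC
end

section
/- Let C be a submodule of (Z/p^sZ)^n of rank K (i.e., minimal number of generators), with C nonzero. Then d_H(C) ≤ n - K + 1. -/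
/-- `C` has rank `K`: it is generated by `K` elements and by no fewer. -/
def hasRank (m n K : ℕ) (C : Submodule (ZMod m) (Fin n → ZMod m)) : Prop :=
  (∃ S : Finset (Fin n → ZMod m), S.card = K ∧ Submodule.span (ZMod m) ↑S = C) ∧
  ∀ T : Finset (Fin n → ZMod m), Submodule.span (ZMod m) ↑T = C → K ≤ T.card

/-! Puncturing a code at `d - 1` coordinates, where `d` is its minimum distance, is injective on
the code, so the code is isomorphic to a submodule of `R ^ (n - d + 1)`. Over a quotient `R` of a
principal ideal domain `A` (here `ℤ → ZMod m`), such a submodule is the image of a submodule of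
`A ^ (n - d + 1)`, which is free of rank at most `n - d + 1`; hence the code needs at most
`n - d + 1` generators. -/

universe u v

open Function Submodule

theorem Submodule.spanRank_map_eq_of_disjoint_ker {R : Type*} {M N : Type u} [Ring R]
    [AddCommGroup M] [Module R M] [AddCommGroup N] [Module R N] (f : M →ₗ[R] N)
    {p : Submodule R M} (h : Disjoint p (LinearMap.ker f)) :
    (p.map f).spanRank = p.spanRank := by
  rw [← spanRank_top p,
    ← spanRank_map_eq_of_injective _ (LinearMap.injective_domRestrict_iff.2 h), map_top,
    LinearMap.range_domRestrict]

theorem hammingNorm_le_card_of_eq_zero_of_notMem {ι : Type*} [Fintype ι] {β : ι → Type*}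
    [∀ i, Zero (β i)] [∀ i, DecidableEq (β i)] {x : ∀ i, β i} {S : Finset ι}
    (h : ∀ i ∉ S, x i = 0) :
    hammingNorm x ≤ S.card :=
  Finset.card_le_card fun i hi => by
    by_contra hiS
    exact (Finset.mem_filter.1 hi).2 (h i hiS)

section QuotientOfPID

variable {A R : Type u} {ι : Type v} [CommRing A] [IsDomain A] [IsPrincipalIdealRing A]
  [Fintype ι]

theorem Submodule.spanRank_le_card_of_isPrincipalIdealRing (N : Submodule A (ι → A)) :
    N.spanRank ≤ Fintype.card ι := by
  rw [← spanRank_top, ← rank_eq_spanRank_of_free]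
  calc Module.rank A N ≤ Module.rank A (ι → A) := N.rank_le
    _ = Fintype.card ι := by simp

variable [CommRing R] [Algebra A R]

theorem Submodule.spanRank_le_card_of_surjective_algebraMap
    (hA : Surjective (algebraMap A R)) (D : Submodule R (ι → R)) :
    D.spanRank ≤ Fintype.card ι := by
  let F : (ι → A) →ₗ[A] (ι → R) := (Algebra.linearMap A R).compLeft ι
  have hF : Surjective F := hA.comp_left
  rw [← spanRank_restrictScalars_eq hA, ← map_comap_eq_of_surjective hF (D.restrictScalars A)]
  exact (spanRank_map_le F _).trans (spanRank_le_card_of_isPrincipalIdealRing _)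

theorem spanRank_le_card_sub_of_card_lt_hammingNorm [DecidableEq R]
    (hA : Surjective (algebraMap A R)) (C : Submodule R (ι → R)) (S : Finset ι)
    (hS : ∀ x ∈ C, x ≠ 0 → S.card < hammingNorm x) :
    C.spanRank ≤ (Fintype.card ι - S.card : ℕ) := by
  classical
  let π : (ι → R) →ₗ[R] ({i // i ∉ S} → R) := LinearMap.funLeft R R Subtype.val
  have hdisj : Disjoint C (LinearMap.ker π) := by
    refine Submodule.disjoint_def.2 fun x hxC hxπ => ?_
    by_contra hx0
    have hsupp : hammingNorm x ≤ S.card :=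
      hammingNorm_le_card_of_eq_zero_of_notMem fun i hi => congrFun hxπ ⟨i, hi⟩
    exact (hS x hxC hx0).not_ge hsupp
  calc C.spanRank = (C.map π).spanRank := (spanRank_map_eq_of_disjoint_ker π hdisj).symm
    _ ≤ Fintype.card {i // i ∉ S} := spanRank_le_card_of_surjective_algebraMap hA _
    _ = (Fintype.card ι - S.card : ℕ) := by rw [Fintype.card_subtype_compl, Fintype.card_coe]

end QuotientOfPID

theorem hasRank.natCast_le_spanRank {m n K : ℕ} {C : Submodule (ZMod m) (Fin n → ZMod m)}
    (hK : hasRank m n K C) : (K : Cardinal) ≤ C.spanRank := by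
  obtain ⟨⟨S, -, hS⟩, hmin⟩ := hK
  have hfg : C.FG := ⟨S, hS⟩
  obtain ⟨T, hTcard, hT⟩ := hfg.exists_span_finset_card_eq_spanFinrank
  rw [hfg.spanRank_eq_spanFinrank, ← hTcard]
  exact_mod_cast hmin T hT

theorem dHam_le_hammingNorm {m n : ℕ} {C : Submodule (ZMod m) (Fin n → ZMod m)}
    {x : Fin n → ZMod m} (hx : x ∈ C) (hx0 : x ≠ 0) : dHam m n C ≤ hammingNorm x :=
  Nat.sInf_le ⟨x, hx, hx0, rfl⟩

theorem dHam_le (m n : ℕ) (C : Submodule (ZMod m) (Fin n → ZMod m)) : dHam m n C ≤ n := by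
  rcases Set.eq_empty_or_nonempty {w | ∃ c ∈ C, c ≠ 0 ∧ hammingNorm c = w} with h | h
  · simp [dHam, h]
  · obtain ⟨c, -, -, hc⟩ := Nat.sInf_mem h
    rw [dHam, ← hc]
    simpa using hammingNorm_le_card_fintype (x := c)

theorem singleton_bound_rank_general (n K : ℕ) (m : ℕ)
    (C : Submodule (ZMod m) (Fin n → ZMod m)) (hK : hasRank m n K C) :
    dHam m n C ≤ n - K + 1 := by
  have hdn := dHam_le m n C
  obtain ⟨S, -, hS⟩ := Finset.exists_subset_card_eq (s := (Finset.univ : Finset (Fin n)))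
    (n := dHam m n C - 1) (by rw [Finset.card_univ, Fintype.card_fin]; omega)
  have hsingleton := spanRank_le_card_sub_of_card_lt_hammingNorm ZMod.intCast_surjective C S
    fun x hx hx0 => by
      have hdx := dHam_le_hammingNorm hx hx0
      have hx_pos := hammingNorm_pos_iff.2 hx0
      omega
  rw [Fintype.card_fin] at hsingleton
  have hKle : K ≤ n - S.card := Nat.cast_le.1 (hK.natCast_le_spanRank.trans hsingleton)
  omega

/-- Singleton bound for the rank: `d_H(C) ≤ n - K + 1`. -/
theorem singleton_bound_rank (p s n K : ℕ) (hp : p.Prime) (hs : 0 < s)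
    (m : ℕ) (hm : m = p ^ s) [NeZero m]
    (C : Submodule (ZMod m) (Fin n → ZMod m)) (hC : C ≠ ⊥)
    (hK : hasRank m n K C) :
    dHam m n C ≤ n - K + 1 :=
  singleton_bound_rank_general n K m C hK
end

section
/- The vector x = (1, 2, ..., 2^s - 1) in (Z/2^sZ)^{2^s - 1} generates a Lee-equidistant cyclic module: every nonzero element of the Z/2^sZ-module generated by x has Lee weight 2^{2s-2}. -/
theorem leeW_add_leeW_add_half {n m : ℕ} (hn : n = 2 * m) (c : ZMod n) :
    leeW n c + leeW n (c + m) = m := by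
  subst hn
  rcases eq_zero_or_neZero m with rfl | _
  · simp [leeW]
  have hv := c.val_lt
  have hm : (m : ZMod (2 * m)).val = m := ZMod.val_cast_of_lt (by have := NeZero.pos m; omega)
  simp only [leeW, ZMod.val_add, hm]
  rcases lt_or_ge c.val m with h | h
  · rw [Nat.mod_eq_of_lt (by omega)]; omega
  · rw [Nat.mod_eq_sub_mod (by omega), Nat.mod_eq_of_lt (by omega)]; omega

theorem sum_leeW_mul_eq_sq_of_dvd_half {n m : ℕ} [NeZero n] (hn : n = 2 * m) {l : ZMod n}
    (hl : l ∣ (m : ZMod n)) : ∑ a, leeW n (l * a) = m ^ 2 := by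
  obtain ⟨a₀, ha₀⟩ := hl
  have hshift : ∑ a, leeW n (l * a) = ∑ a, leeW n (l * a + m) := by
    rw [← Equiv.sum_comp (Equiv.addRight a₀)]
    simp [mul_add, ha₀]
  have : 2 * ∑ a, leeW n (l * a) = 2 * m ^ 2 := by
    calc 2 * ∑ a, leeW n (l * a) = ∑ a, (leeW n (l * a) + leeW n (l * a + m)) := by
          rw [Finset.sum_add_distrib, ← hshift, two_mul]
      _ = n * m := by simp [leeW_add_leeW_add_half hn]
      _ = 2 * m ^ 2 := by rw [hn]; ring
  omega

theorem ZMod.dvd_prime_pow_of_ne_zero {p k : ℕ} (hp : p.Prime) {a : ZMod (p ^ (k + 1))}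
    (ha : a ≠ 0) : a ∣ (p : ZMod (p ^ (k + 1))) ^ k := by
  have : NeZero (p ^ (k + 1)) := ⟨pow_ne_zero _ hp.ne_zero⟩
  have hv : a.val ≠ 0 := a.val_ne_zero.2 ha
  obtain ⟨j, w, hpw, hval⟩ := Nat.exists_eq_pow_mul_and_not_dvd hv p hp.ne_one
  have hj : j ≤ k := by
    have : p ^ j < p ^ (k + 1) :=
      (Nat.le_of_dvd (Nat.pos_of_ne_zero hv) ⟨w, hval⟩).trans_lt a.val_lt
    have := (Nat.pow_lt_pow_iff_right hp.one_lt).1 this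
    omega
  have hw : Nat.Coprime w (p ^ (k + 1)) :=
    Nat.Coprime.pow_right _ (hp.coprime_iff_not_dvd.2 hpw).symm
  refine ⟨(w : ZMod _)⁻¹ * (p : ZMod _) ^ (k - j), ?_⟩
  rw [← ZMod.natCast_zmod_val a, hval]
  push_cast
  calc (p : ZMod (p ^ (k + 1))) ^ k = p ^ j * p ^ (k - j) := by rw [← pow_add, Nat.add_sub_cancel' hj]
    _ = p ^ j * w * ((w : ZMod (p ^ (k + 1)))⁻¹ * p ^ (k - j)) := by
        rw [mul_assoc, ← mul_assoc (w : ZMod (p ^ (k + 1))), ZMod.coe_mul_inv_eq_one w hw, one_mul]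

theorem ZMod.sum_univ_eq_add_sum_fin_pred {M : Type*} [AddCommMonoid M] {n : ℕ} [NeZero n]
    (f : ZMod n → M) : ∑ a, f a = f 0 + ∑ i : Fin (n - 1), f ((i : ℕ) + 1) := by
  obtain ⟨k, rfl⟩ : ∃ k, n = k + 1 := ⟨n - 1, by have := NeZero.pos n; omega⟩
  -- `ZMod (k + 1)` is `Fin (k + 1)` by definition.
  refine (Fin.sum_univ_succ (n := k) f).trans (congrArg _ (Fintype.sum_congr _ _ fun i => ?_))
  congr 1
  rw [← Nat.cast_succ]
  exact (Fin.cast_val_eq_self i.succ).symm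

/-- The vector `(1,2,…,2^s-1) ∈ (ℤ/2^sℤ)^{2^s-1}` generates a Lee-equidistant
cyclic module: every nonzero multiple has Lee weight `2^{2s-2}`. -/
theorem equidistant_construction_Z2s (s : ℕ) (hs : 0 < s)
    (x : Fin (2 ^ s - 1) → ZMod (2 ^ s)) (hx : ∀ i, x i = ((i : ℕ) + 1 : ZMod (2 ^ s))) :
    ∀ lam : ZMod (2 ^ s), lam • x ≠ 0 →
      leeWV (2 ^ s) (2 ^ s - 1) (lam • x) = 2 ^ (2 * s - 2) := by
  intro lam hlam
  obtain ⟨k, rfl⟩ : ∃ k, s = k + 1 := ⟨s - 1, by omega⟩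
  have hlam₀ : lam ≠ 0 := by
    rintro rfl
    exact hlam (zero_smul _ x)
  have hsum : leeWV _ _ (lam • x) = ∑ a, leeW (2 ^ (k + 1)) (lam * a) := by
    simp [ZMod.sum_univ_eq_add_sum_fin_pred, leeWV, leeW, hx]
  have hdvd : lam ∣ ((2 ^ k : ℕ) : ZMod (2 ^ (k + 1))) := by
    simpa using ZMod.dvd_prime_pow_of_ne_zero Nat.prime_two hlam₀
  rw [hsum, sum_leeW_mul_eq_sq_of_dvd_half (pow_succ' 2 k) hdvd, ← pow_mul]
  congr 1
  omega
end

section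
/- Let p be an odd prime, s > 1, and let C ⊆ (Z/p^sZ)^n be a Lee-equidistant submodule of rank 1 generated by g ∈ ⟨p^{i-1}⟩ \ ⟨p^i⟩ with constant nonzero Lee weight w, and suppose C is non-degenerate in its support (each coordinate projection is a nonzero ideal or zero). If (n_0,...,n_s) is the support subtype of C, then n_j = 0 for j < i-1, and w = ((p+1)/4)·p^{s-1}·n_{i-1}, and n_{i-1}(p-1) = p^{j-i+2}·n_j for all j ∈ {i,...,s-1}. -/
open Finset

lemma sum_range_mul_mod {M : Type*} [AddCommMonoid M] (F : ℕ → M) (q n : ℕ) :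
    ∑ k ∈ range (q * n), F (k % n) = q • ∑ k ∈ range n, F k := by
  induction q with
  | zero => simp
  | succ q ih =>
    rw [Nat.succ_mul, sum_range_add, ih, succ_nsmul]
    congr 1
    exact sum_congr rfl fun k hk => by
      rw [Nat.mul_add_mod_self_right, Nat.mod_eq_of_lt (mem_range.1 hk)]

lemma four_mul_sum_range_min_sub_add_one {M : ℕ} (hM : Odd M) :
    4 * ∑ r ∈ range M, min r (M - r) + 1 = M ^ 2 := by
  obtain ⟨h, rfl⟩ := hM
  have hsplit : ∑ r ∈ range (2 * h + 1), min r (2 * h + 1 - r)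
      = ∑ r ∈ range (h + 1), r + ∑ r ∈ range h, (h - r) := by
    rw [show 2 * h + 1 = (h + 1) + h by ring, sum_range_add]
    congr 1
    · exact sum_congr rfl fun r hr => by have := mem_range.1 hr; omega
    · exact sum_congr rfl fun r hr => by have := mem_range.1 hr; omega
  have hrefl : ∑ r ∈ range h, (h - r) = ∑ r ∈ range (h + 1), r := by
    rw [sum_range_succ', ← sum_range_reflect]
    exact sum_congr rfl fun r hr => by have := mem_range.1 hr; omega
  have hgauss := sum_range_id_mul_two (h + 1)
  rw [Nat.add_sub_cancel] at hgauss
  rw [hsplit, hrefl]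
  linarith

namespace ZMod

lemma sum_val {M : Type*} [AddCommMonoid M] (m : ℕ) [NeZero m] (F : ℕ → M) :
    ∑ a : ZMod m, F a.val = ∑ k ∈ range m, F k := by
  obtain ⟨m, rfl⟩ := Nat.exists_eq_succ_of_ne_zero (NeZero.ne m)
  exact Fin.sum_univ_eq_sum_range F _

variable {p s : ℕ}

lemma natCast_pow_eq_zero_iff (hp : 1 < p) (t : ℕ) :
    (p : ZMod (p ^ s)) ^ t = 0 ↔ s ≤ t := by
  rw [← Nat.cast_pow, natCast_eq_zero_iff, Nat.pow_dvd_pow_iff_le_right hp]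

lemma natCast_pow_min (e : ℕ) : (p : ZMod (p ^ s)) ^ min e s = (p : ZMod (p ^ s)) ^ e := by
  rcases le_total e s with h | h
  · rw [min_eq_left h]
  · have hs : (p : ZMod (p ^ s)) ^ s = 0 := by exact_mod_cast natCast_self (p ^ s)
    rw [min_eq_right h, hs, ← Nat.add_sub_cancel' h, pow_add, hs, zero_mul]

lemma val_mul_natCast_pow [NeZero (p ^ s)] {e : ℕ} (he : e ≤ s) (a : ZMod (p ^ s)) :
    (a * (p : ZMod (p ^ s)) ^ e).val = p ^ e * (a.val % p ^ (s - e)) := by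
  have hs : p ^ s = p ^ e * p ^ (s - e) := by rw [← pow_add, Nat.add_sub_cancel' he]
  rw [val_mul, ← Nat.cast_pow, val_natCast, Nat.mul_mod_mod, mul_comm,
    ← Nat.mul_mod_mul_left, ← hs]

lemma sum_val_mul_natCast_pow {M : Type*} [AddCommMonoid M] [NeZero (p ^ s)] {e : ℕ}
    (he : e ≤ s) (F : ℕ → M) :
    ∑ a : ZMod (p ^ s), F (a * (p : ZMod (p ^ s)) ^ e).val
      = p ^ e • ∑ r ∈ range (p ^ (s - e)), F (p ^ e * r) := by
  simp_rw [val_mul_natCast_pow he]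
  rw [sum_val (p ^ s) fun k => F (p ^ e * (k % p ^ (s - e))), ← sum_range_mul_mod,
    ← pow_add, Nat.add_sub_cancel' he]

lemma four_mul_sum_leeW_mul_natCast_pow_add [NeZero (p ^ s)] (hp : Odd p) {e : ℕ}
    (he : e ≤ s) :
    4 * ∑ a : ZMod (p ^ s), leeW (p ^ s) (a * (p : ZMod (p ^ s)) ^ e) + p ^ (2 * e)
      = p ^ (2 * s) := by
  have hs : p ^ s = p ^ e * p ^ (s - e) := by rw [← pow_add, Nat.add_sub_cancel' he]
  have hmin (r : ℕ) : min (p ^ e * r) (p ^ s - p ^ e * r) = p ^ e * min r (p ^ (s - e) - r) := by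
    rw [hs, ← Nat.mul_sub, Nat.mul_min_mul_left]
  unfold leeW
  rw [sum_val_mul_natCast_pow he fun v => min v (p ^ s - v)]
  simp only [hmin, ← mul_sum, smul_eq_mul]
  have hM := four_mul_sum_range_min_sub_add_one (hp.pow (n := s - e))
  calc 4 * (p ^ e * (p ^ e * ∑ r ∈ range (p ^ (s - e)), min r (p ^ (s - e) - r))) + p ^ (2 * e)
      = p ^ (2 * e) * (4 * ∑ r ∈ range (p ^ (s - e)), min r (p ^ (s - e) - r) + 1) := by ring
    _ = p ^ (2 * s) := by rw [hM, ← pow_mul, ← pow_add]; congr 1; omega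

lemma card_mul_natCast_pow_eq_zero [NeZero (p ^ s)] {e : ℕ} (he : e ≤ s) :
    #{a : ZMod (p ^ s) | a * (p : ZMod (p ^ s)) ^ e = 0} = p ^ e := by
  have hs : p ^ s = p ^ e * p ^ (s - e) := by rw [← pow_add, Nat.add_sub_cancel' he]
  have hpe : p ^ e ≠ 0 := fun h => NeZero.ne (p ^ s) (by rw [hs, h, zero_mul])
  have hM : 0 < p ^ (s - e) :=
    Nat.pos_of_ne_zero fun h => NeZero.ne (p ^ s) (by rw [hs, h, mul_zero])
  simp_rw [card_filter, ← val_eq_zero]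
  rw [sum_val_mul_natCast_pow he fun v => if v = 0 then 1 else 0]
  simp only [mul_eq_zero, hpe, false_or, sum_ite_eq', mem_range, hM, if_true, smul_eq_mul,
    mul_one]

lemma exists_eq_natCast_pow_mul_unit [NeZero (p ^ s)] (hp : p.Prime) {x : ZMod (p ^ s)}
    (hx : x ≠ 0) : ∃ t < s, ∃ u : (ZMod (p ^ s))ˣ, x = (p : ZMod (p ^ s)) ^ t * u := by
  obtain ⟨t, c, hpc, hxc⟩ :=
    Nat.exists_eq_pow_mul_and_not_dvd ((val_ne_zero x).2 hx) p hp.ne_one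
  have hc : IsUnit (c : ZMod (p ^ s)) :=
    (isUnit_iff_coprime c _).2 (Nat.Coprime.pow_right s ((hp.coprime_iff_not_dvd).2 hpc).symm)
  have hxt : x = (p : ZMod (p ^ s)) ^ t * c := by
    rw [← natCast_zmod_val x, hxc]; push_cast; rfl
  refine ⟨t, ?_, hc.unit, hxt⟩
  by_contra! hst
  exact hx (by rw [hxt, (natCast_pow_eq_zero_iff hp.one_lt t).2 hst, zero_mul])

lemma natCast_pow_mul_unit_mem_span_iff (hp : 1 < p) {t : ℕ} (ht : t < s)
    (u : (ZMod (p ^ s))ˣ) (r : ℕ) :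
    (p : ZMod (p ^ s)) ^ t * u ∈ Ideal.span {(p : ZMod (p ^ s)) ^ r} ↔ r ≤ t := by
  refine ⟨fun h => ?_, fun h => Ideal.mul_mem_right _ _
    (Ideal.mem_span_singleton.2 (pow_dvd_pow _ h))⟩
  by_contra! htr
  obtain ⟨c, hc⟩ := Ideal.mem_span_singleton'.1 h
  obtain ⟨d, hd⟩ : ∃ d, s = t + d + 1 := ⟨s - t - 1, by omega⟩
  -- multiplying by `p ^ d` kills the right side but not the left
  have key : (p : ZMod (p ^ s)) ^ (t + d) * u = c * (p : ZMod (p ^ s)) ^ (r + d) := by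
    rw [pow_add, pow_add]
    linear_combination (-(p : ZMod (p ^ s)) ^ d) * hc
  rw [(natCast_pow_eq_zero_iff hp (r + d)).2 (by omega), mul_zero, Units.mul_left_eq_zero,
    natCast_pow_eq_zero_iff hp] at key
  omega

lemma span_natCast_pow_eq_iff (hp : 1 < p) {t : ℕ} (ht : t < s) (r : ℕ) :
    Ideal.span {(p : ZMod (p ^ s)) ^ t} = Ideal.span {(p : ZMod (p ^ s)) ^ r} ↔ t = r := by
  refine ⟨fun h => ?_, fun h => h ▸ rfl⟩
  have hmem {a : ℕ} (ha : a < s) (b : ℕ) :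
      (p : ZMod (p ^ s)) ^ a ∈ Ideal.span {(p : ZMod (p ^ s)) ^ b} ↔ b ≤ a := by
    simpa using natCast_pow_mul_unit_mem_span_iff hp ha 1 b
  have hrt : r ≤ t := (hmem ht r).1 (h ▸ Ideal.mem_span_singleton_self _)
  have htr : t ≤ r := (hmem (hrt.trans_lt ht) t).1 (h ▸ Ideal.mem_span_singleton_self _)
  omega

end ZMod

section LeeWeight

variable {p s n : ℕ}

lemma sum_leeWV_smul_eq_card_mul {m : ℕ} [NeZero m] {x : Fin n → ZMod m} {w : ℕ}
    (hequi : ∀ a : ZMod m, a • x ≠ 0 → leeWV m n (a • x) = w) :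
    ∑ a : ZMod m, leeWV m n (a • x) = #{a : ZMod m | a • x ≠ 0} * w := by
  calc ∑ a : ZMod m, leeWV m n (a • x) = ∑ a with a • x ≠ 0, leeWV m n (a • x) := by
        refine (sum_filter_of_ne (p := fun a => a • x ≠ 0) fun a _ ha h => ha ?_).symm
        rw [h]
        simp [leeWV, leeW]
    _ = #{a : ZMod m | a • x ≠ 0} * w := by
        rw [sum_congr rfl fun a ha => hequi a (mem_filter.1 ha).2, sum_const, smul_eq_mul]

lemma four_mul_sum_leeWV_smul_add [NeZero (p ^ s)] (hp : Odd p) {x : Fin n → ZMod (p ^ s)}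
    {e : Fin n → ℕ} {u : Fin n → (ZMod (p ^ s))ˣ}
    (hx : ∀ j, x j = (p : ZMod (p ^ s)) ^ e j * u j) :
    4 * ∑ a : ZMod (p ^ s), leeWV (p ^ s) n (a • x) + ∑ j, p ^ (2 * min (e j) s)
      = n * p ^ (2 * s) := by
  have hcoord (j : Fin n) : ∑ a : ZMod (p ^ s), leeW (p ^ s) (a * x j)
      = ∑ a : ZMod (p ^ s), leeW (p ^ s) (a * (p : ZMod (p ^ s)) ^ min (e j) s) := by
    rw [ZMod.natCast_pow_min]
    exact Fintype.sum_equiv (Units.mulRight (u j)) _ _ fun a => by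
      rw [hx, Units.mulRight_apply, mul_right_comm, mul_assoc]
  unfold leeWV
  simp only [Pi.smul_apply, smul_eq_mul]
  rw [sum_comm, mul_sum, ← sum_add_distrib]
  simp only [hcoord, ZMod.four_mul_sum_leeW_mul_natCast_pow_add hp (min_le_right _ s),
    sum_const, card_univ, Fintype.card_fin, smul_eq_mul]

lemma card_smul_eq_zero [NeZero (p ^ s)] {x : Fin n → ZMod (p ^ s)} {e : Fin n → ℕ}
    {u : Fin n → (ZMod (p ^ s))ˣ} (hx : ∀ j, x j = (p : ZMod (p ^ s)) ^ e j * u j)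
    {j₀ : Fin n} (hj₀ : ∀ j, e j₀ ≤ e j) :
    #{a : ZMod (p ^ s) | a • x = 0} = p ^ min (e j₀) s := by
  have hzero (a : ZMod (p ^ s)) : a • x = 0 ↔ a * (p : ZMod (p ^ s)) ^ min (e j₀) s = 0 := by
    rw [ZMod.natCast_pow_min, funext_iff]
    simp only [Pi.smul_apply, smul_eq_mul, Pi.zero_apply, hx, ← mul_assoc,
      Units.mul_left_eq_zero]
    refine ⟨fun h => h j₀, fun h j => ?_⟩
    rw [← Nat.add_sub_cancel' (hj₀ j), pow_add, ← mul_assoc, h, zero_mul]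
  rw [filter_congr fun a _ => hzero a, ZMod.card_mul_natCast_pow_eq_zero (min_le_right _ _)]

lemma four_mul_sub_mul_weight_eq [NeZero (p ^ s)] (hp : Odd p) {w : ℕ}
    {g : Fin n → ZMod (p ^ s)} {T : Fin n → ℕ} {u : Fin n → (ZMod (p ^ s))ˣ}
    (hg : ∀ j, g j = (p : ZMod (p ^ s)) ^ T j * u j) {j₀ : Fin n}
    (hj₀ : ∀ j, T j₀ ≤ T j)
    (hequi : ∀ a : ZMod (p ^ s), a • g ≠ 0 → leeWV (p ^ s) n (a • g) = w)
    {k : ℕ} (hk : T j₀ + k ≤ s) :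
    4 * ((p : ℤ) ^ s - p ^ (T j₀ + k)) * w
      = ∑ j, ((p : ℤ) ^ (2 * s) - p ^ (2 * min (T j + k) s)) := by
  set x := (p : ZMod (p ^ s)) ^ k • g
  have hx (j : Fin n) : x j = (p : ZMod (p ^ s)) ^ (T j + k) * u j := by
    rw [show x j = (p : ZMod (p ^ s)) ^ k * g j from rfl, hg, ← mul_assoc, ← pow_add, add_comm]
  have hweight := sum_leeWV_smul_eq_card_mul (x := x) fun a ha => by
    rw [smul_smul] at ha ⊢; exact hequi _ ha
  have hcoord := four_mul_sum_leeWV_smul_add hp hx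
  have hcount :
      #{a : ZMod (p ^ s) | a • x = 0} + #{a : ZMod (p ^ s) | a • x ≠ 0} = p ^ s := by
    rw [card_filter_add_card_filter_not, card_univ, ZMod.card]
  rw [card_smul_eq_zero hx (j₀ := j₀) fun j => Nat.add_le_add_right (hj₀ j) k,
    min_eq_left hk] at hcount
  rw [hweight] at hcoord
  zify at hcount hcoord
  rw [sum_sub_distrib, sum_const, card_univ, Fintype.card_fin, nsmul_eq_mul]
  linear_combination hcoord - 4 * w * hcount

end LeeWeight

lemma sum_comp_eq_sum_range_card_nsmul {ι M : Type*} [Fintype ι] [AddCommMonoid M]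
    {T : ι → ℕ} {s : ℕ} (hT : ∀ j, T j < s) (f : ℕ → M) :
    ∑ j, f (T j) = ∑ t ∈ range s, #{j | T j = t} • f t := by
  rw [← sum_fiberwise_of_maps_to' (fun j _ => mem_range.2 (hT j)) f]
  simp only [sum_const]

section LevelCounts

variable {p s c w : ℕ} {N : ℕ → ℕ}

-- Subtract the identities for `k` and `k + 1`: only the levels `t ≤ r = s - 1 - k` still change.
lemma four_mul_pow_mul_eq_of_weight_eq
    (H : ∀ k, c + k ≤ s → 4 * ((p : ℤ) ^ s - p ^ (c + k)) * w
      = ∑ t ∈ range s, N t * ((p : ℤ) ^ (2 * s) - p ^ (2 * min (t + k) s)))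
    (hp : 1 < p) {k r : ℕ} (hkr : k + r + 1 = s) (hcr : c ≤ r) :
    4 * (p : ℤ) ^ (c + k) * w
      = (p + 1) * p ^ (2 * k) * ∑ t ∈ range (r + 1), N t * (p : ℤ) ^ (2 * t) := by
  have hdiff : ∑ t ∈ range s, (N t : ℤ) * (p ^ (2 * s) - p ^ (2 * min (t + k) s))
      - ∑ t ∈ range s, (N t : ℤ) * (p ^ (2 * s) - p ^ (2 * min (t + (k + 1)) s))
      = (p ^ 2 - 1) * p ^ (2 * k) * ∑ t ∈ range (r + 1), N t * (p : ℤ) ^ (2 * t) := by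
    rw [← sum_sub_distrib, ← sum_subset (range_subset_range.2 (by omega : r + 1 ≤ s)),
      mul_sum]
    · refine sum_congr rfl fun t ht => ?_
      rw [mem_range] at ht
      rw [min_eq_left (by omega), min_eq_left (by omega)]
      ring
    · intro t _ ht
      rw [mem_range] at ht
      rw [min_eq_right (by omega), min_eq_right (by omega), sub_self]
  refine mul_left_cancel₀ (sub_ne_zero.2 (by exact_mod_cast hp.ne') : (p : ℤ) - 1 ≠ 0) ?_
  linear_combination H k (by omega) - H (k + 1) (by omega) + hdiff

lemma weight_and_level_counts_of_weight_eq
    (H : ∀ k, c + k ≤ s → 4 * ((p : ℤ) ^ s - p ^ (c + k)) * w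
      = ∑ t ∈ range s, N t * ((p : ℤ) ^ (2 * s) - p ^ (2 * min (t + k) s)))
    (hp : 1 < p) (hcs : c < s) (hN : ∀ t < c, N t = 0) :
    4 * w = (p + 1) * p ^ (s - 1) * N c ∧
      ∀ r, c < r → r < s → N c * (p - 1) = p ^ (r - c + 1) * N r := by
  have hpos : (0 : ℤ) < p := by exact_mod_cast (zero_lt_one.trans hp)
  have hQc : ∑ t ∈ range (c + 1), N t * (p : ℤ) ^ (2 * t) = N c * (p : ℤ) ^ (2 * c) := by
    rw [sum_range_succ, sum_eq_zero fun t ht => ?_, zero_add]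
    rw [hN t (mem_range.1 ht), Nat.cast_zero, zero_mul]
  obtain ⟨d, rfl⟩ : ∃ d, s = c + d + 1 := ⟨s - c - 1, by omega⟩
  have hw : (4 * w : ℤ) = (p + 1) * p ^ (c + d) * N c := by
    have h := four_mul_pow_mul_eq_of_weight_eq H hp (k := d) (r := c) (by omega) le_rfl
    rw [hQc] at h
    refine mul_left_cancel₀ (pow_ne_zero (c + d) hpos.ne') ?_
    linear_combination h
  have hQ : ∀ r, c ≤ r → r ≤ c + d →
      ∑ t ∈ range (r + 1), N t * (p : ℤ) ^ (2 * t) = N c * (p : ℤ) ^ (c + r) := by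
    intro r hcr hrs
    obtain ⟨k, hk⟩ : ∃ k, c + d = k + r := ⟨c + d - r, by omega⟩
    have h := four_mul_pow_mul_eq_of_weight_eq H hp (k := k) (r := r) (by omega) hcr
    refine mul_left_cancel₀ (mul_ne_zero (by positivity : (p : ℤ) + 1 ≠ 0)
      (pow_ne_zero (2 * k) hpos.ne')) ?_
    rw [hk] at hw
    linear_combination -h + p ^ (c + k) * hw
  refine ⟨by exact_mod_cast hw, fun r hcr hrs => ?_⟩
  obtain ⟨e, rfl⟩ : ∃ e, r = c + e + 1 := ⟨r - c - 1, by omega⟩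
  have hstep := hQ (c + e + 1) (by omega) (by omega)
  rw [sum_range_succ, hQ (c + e) (by omega) (by omega)] at hstep
  rw [show c + e + 1 - c + 1 = e + 2 by omega]
  have h : (N c * ((p : ℤ) - 1) : ℤ) = p ^ (e + 2) * N (c + e + 1) := by
    refine mul_left_cancel₀ (pow_ne_zero (2 * c + e) hpos.ne') ?_
    linear_combination -hstep
  rw [← Nat.cast_one, ← Nat.cast_sub hp.le] at h
  exact_mod_cast h

end LevelCounts

open scoped Classical in
theorem rank_one_equidistant_subtype_general (p s n i : ℕ) (hp : p.Prime) (hodd : Odd p)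
    (m : ℕ) (hm : m = p ^ s) [NeZero m]
    (g : Fin n → ZMod m)
    (hg1 : ∀ j, g j ∈ Ideal.span {(p : ZMod m) ^ (i - 1)})
    (hg2 : ¬ ∀ j, g j ∈ Ideal.span {(p : ZMod m) ^ i})
    (C : Submodule (ZMod m) (Fin n → ZMod m))
    (hC : C = Submodule.span (ZMod m) {g})
    (w : ℕ)
    (hequi : ∀ c ∈ C, c ≠ 0 → leeWV m n c = w)
    (hnd : ∀ j : Fin n, Submodule.map (LinearMap.proj j) C ≠ ⊥)
    (nF : ℕ → ℕ)
    (hn : ∀ t, nF t = (Finset.univ.filter (fun j : Fin n =>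
        Submodule.map (LinearMap.proj j) C
          = Submodule.span (ZMod m) {(p : ZMod m) ^ t})).card) :
    (∀ j, j + 1 < i → nF j = 0) ∧
    4 * w = (p + 1) * p ^ (s - 1) * nF (i - 1) ∧
    (∀ j, i ≤ j → j ≤ s - 1 → nF (i - 1) * (p - 1) = p ^ (j - i + 2) * nF j) := by
  subst hm hC
  have hproj (j : Fin n) :
      Submodule.map (LinearMap.proj j) (Submodule.span (ZMod (p ^ s)) {g}) = Ideal.span {g j} := by
    rw [Submodule.map_span, Set.image_singleton]; rfl
  choose T hTs u hu using fun j => ZMod.exists_eq_natCast_pow_mul_unit (x := g j) hp fun h =>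
    hnd j (by rw [hproj, h, Ideal.span_singleton_eq_bot.2 rfl])
  have hnT (t : ℕ) : nF t = #{j | T j = t} := by
    rw [hn]
    refine congrArg card (filter_congr fun j _ => ?_)
    rw [hproj, hu, Ideal.span_singleton_mul_right_unit (u j).isUnit,
      ZMod.span_natCast_pow_eq_iff hp.one_lt (hTs j)]
  have hmem (j : Fin n) (r : ℕ) :=
    hu j ▸ ZMod.natCast_pow_mul_unit_mem_span_iff hp.one_lt (hTs j) (u j) r
  have hTi (j : Fin n) : i - 1 ≤ T j := (hmem j _).1 (hg1 j)
  obtain ⟨j₀, hj₀⟩ : ∃ j₀, T j₀ < i := by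
    simpa only [hmem, not_forall, not_le] using hg2
  have hc : T j₀ = i - 1 := by have := hTi j₀; omega
  have hlow (t : ℕ) (ht : t < i - 1) : nF t = 0 := by
    rw [hnT]; exact card_eq_zero.2 (filter_eq_empty_iff.2 fun j _ => by have := hTi j; omega)
  have H (k : ℕ) (hk : i - 1 + k ≤ s) : 4 * ((p : ℤ) ^ s - p ^ (i - 1 + k)) * w
      = ∑ t ∈ range s, nF t * ((p : ℤ) ^ (2 * s) - p ^ (2 * min (t + k) s)) := by
    have hequi' (a : ZMod (p ^ s)) :=
      hequi _ (Submodule.smul_mem _ a (Submodule.mem_span_singleton_self g))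
    rw [← hc, four_mul_sub_mul_weight_eq hodd hu (fun j => hc ▸ hTi j) hequi' (hc ▸ hk),
      sum_comp_eq_sum_range_card_nsmul hTs fun t => (p : ℤ) ^ (2 * s) - p ^ (2 * min (t + k) s)]
    simp only [hnT, nsmul_eq_mul]
  obtain ⟨hw, hlevels⟩ :=
    weight_and_level_counts_of_weight_eq H hp.one_lt (hc ▸ hTs j₀) hlow
  refine ⟨fun t ht => hlow t (by omega), hw, fun r hir hrs => ?_⟩
  rw [hlevels r (by omega) (by omega), show r - (i - 1) + 1 = r - i + 2 by omega]

open scoped Classical in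
/-- Support subtype conditions for a rank-1 Lee-equidistant code over `ℤ/p^sℤ`,
`p` odd, `s > 1`, generated by `g ∈ ⟨p^{i-1}⟩ \ ⟨p^i⟩` with constant weight `w`:
`n_j = 0` for `j < i-1`, `4w = (p+1)p^{s-1}n_{i-1}`, and
`n_{i-1}(p-1) = p^{j-i+2}n_j` for `i ≤ j ≤ s-1`. -/
theorem rank_one_equidistant_subtype (p s n i : ℕ) (hp : p.Prime) (hodd : Odd p)
    (hs : 1 < s) (hi1 : 1 ≤ i) (his : i ≤ s)
    (m : ℕ) (hm : m = p ^ s) [NeZero m]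
    (g : Fin n → ZMod m)
    (hg1 : ∀ j, g j ∈ Ideal.span {(p : ZMod m) ^ (i - 1)})
    (hg2 : ¬ ∀ j, g j ∈ Ideal.span {(p : ZMod m) ^ i})
    (C : Submodule (ZMod m) (Fin n → ZMod m))
    (hC : C = Submodule.span (ZMod m) {g})
    (w : ℕ) (hw : w ≠ 0)
    (hequi : ∀ c ∈ C, c ≠ 0 → leeWV m n c = w)
    (hnd : ∀ j : Fin n, Submodule.map (LinearMap.proj j) C ≠ ⊥)
    (nF : ℕ → ℕ)
    (hn : ∀ t, nF t = (Finset.univ.filter (fun j : Fin n =>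
        Submodule.map (LinearMap.proj j) C
          = Submodule.span (ZMod m) {(p : ZMod m) ^ t})).card) :
    (∀ j, j + 1 < i → nF j = 0) ∧
    4 * w = (p + 1) * p ^ (s - 1) * nF (i - 1) ∧
    (∀ j, i ≤ j → j ≤ s - 1 → nF (i - 1) * (p - 1) = p ^ (j - i + 2) * nF j) :=
  rank_one_equidistant_subtype_general p s n i hp hodd m hm g hg1 hg2 C hC w hequi hnd nF hn
end
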